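/- arXiv:2502.00254 — 2 statements merged into one kernel-verified Lean document; each statement's English description precedes it below -/
import Mathlib

section
/- Let m ≥ 1 and let a_1, a_2, b_1, b_2 be tuples of reals such that m·a_s ∉ {0,1,…,m−1} for every entry a_s of a_1 and of a_2. Then H^E_m[b_1; a_1] ⊠_{2m} H^E_m[b_2; a_2] = H^E_m[−1/(2m), b_1, b_2; 1−1/(2m), a_1, a_2]. -/
open Polynomial Finset

noncomputable section

namespace FFP

/-- Coefficient `e_k(p)` defined by `p(x) = Σ (-1)^k e_k(p) x^(n-k)`. -/
def eC (n k : ℕ) (p : Polynomial ℂ) : ℂ := (-1) ^ k * p.coeff (n - k)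

/-- Falling factorial `x(x-1)⋯(x-k+1)`. -/
def ffa (x : ℂ) (k : ℕ) : ℂ := ∏ i ∈ Finset.range k, (x - i)

/-- Rising factorial `x(x+1)⋯(x+k-1)`. -/
def rfa (x : ℂ) (k : ℕ) : ℂ := ∏ i ∈ Finset.range k, (x + i)

/-- Monic polynomial of degree `n` from prescribed `e_k` coefficients. -/
def ofE (n : ℕ) (f : ℕ → ℂ) : Polynomial ℂ :=
  ∑ k ∈ Finset.range (n + 1), Polynomial.C ((-1) ^ k * f k) * Polynomial.X ^ (n - k)

/-- Finite free additive convolution. -/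
def boxplus (n : ℕ) (p q : Polynomial ℂ) : Polynomial ℂ :=
  ofE n fun k => ffa (n : ℂ) k * ∑ ij ∈ Finset.HasAntidiagonal.antidiagonal k,
    eC n ij.1 p * eC n ij.2 q / (ffa (n : ℂ) ij.1 * ffa (n : ℂ) ij.2)

/-- Finite free multiplicative convolution. -/
def boxtimes (n : ℕ) (p q : Polynomial ℂ) : Polynomial ℂ :=
  ofE n fun k => eC n k p * eC n k q / (n.choose k : ℂ)

/-- Dilation: `(dil n α p)(x) = α^n p(x/α)` for polynomials of degree ≤ n. -/
def dil (n : ℕ) (α : ℂ) (p : Polynomial ℂ) : Polynomial ℂ :=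
  ∑ j ∈ Finset.range (n + 1), Polynomial.C (α ^ (n - j) * p.coeff j) * Polynomial.X ^ j

/-- Symmetrization. -/
def sym (n : ℕ) (p : Polynomial ℂ) : Polynomial ℂ := boxplus n p (dil n (-1) p)

/-- Degree halving operation. -/
def Qm (m : ℕ) (p : Polynomial ℂ) : Polynomial ℂ :=
  ofE m fun k => (-1) ^ k * eC (2 * m) (2 * k) p

/-- Degree doubling operation. -/
def Sm (p : Polynomial ℂ) : Polynomial ℂ := p.comp (Polynomial.X ^ 2)

/-- Hypergeometric polynomial `H_n[b; a]`. -/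
def hyp (n : ℕ) {j i : ℕ} (b : Fin j → ℝ) (a : Fin i → ℝ) : Polynomial ℂ :=
  ofE n fun k =>
    (n.choose k : ℂ) * (∏ t, ffa ((n : ℂ) * (b t : ℂ)) k) / ∏ s, ffa ((n : ℂ) * (a s : ℂ)) k

/-- Even hypergeometric polynomial `H^E_m[b; a](x) = H_m[b; a](x²)`. -/
def hypE (m : ℕ) {j i : ℕ} (b : Fin j → ℝ) (a : Fin i → ℝ) : Polynomial ℂ :=
  (hyp m b a).comp (Polynomial.X ^ 2)

/-- A monic polynomial of degree `2m` is even: all odd `e`-coefficients vanish. -/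
def IsEvenP (m : ℕ) (p : Polynomial ℂ) : Prop :=
  ∀ k ≤ 2 * m, Odd k → eC (2 * m) k p = 0

lemma coeff_ofE (n : ℕ) (f : ℕ → ℂ) {k : ℕ} (hk : k ≤ n) :
    (ofE n f).coeff (n - k) = (-1) ^ k * f k := by
  rw [ofE, Polynomial.finset_sum_coeff]
  rw [Finset.sum_eq_single k]
  · rw [Polynomial.coeff_C_mul, Polynomial.coeff_X_pow, if_pos rfl, mul_one]
  · intro b hb hbk
    simp only [Finset.mem_range] at hb
    rw [Polynomial.coeff_C_mul, Polynomial.coeff_X_pow, if_neg (by omega), mul_zero]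
  · intro h; exact absurd (Finset.mem_range.2 (by omega)) h

lemma eC_ofE (n : ℕ) (f : ℕ → ℂ) {k : ℕ} (hk : k ≤ n) :
    eC n k (ofE n f) = f k := by
  rw [eC, coeff_ofE n f hk, ← mul_assoc, ← mul_pow]
  simp

lemma ofE_congr {n : ℕ} {f g : ℕ → ℂ} (h : ∀ k ≤ n, f k = g k) : ofE n f = ofE n g := by
  unfold ofE
  exact Finset.sum_congr rfl fun k hk => by rw [h k (by simpa using Nat.lt_succ_iff.1 (Finset.mem_range.1 hk))]

lemma ofE_comp_sq (m : ℕ) (g : ℕ → ℂ) :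
    (ofE m g).comp (Polynomial.X ^ 2) =
      ofE (2 * m) (fun k => if Even k then (-1) ^ (k / 2) * g (k / 2) else 0) := by
  rw [ofE, Polynomial.sum_comp]
  have hsub : (Finset.range (m + 1)).image (fun l => 2 * l) ⊆ Finset.range (2 * m + 1) := by
    intro x hx
    simp only [Finset.mem_image, Finset.mem_range] at hx ⊢
    obtain ⟨l, hl, rfl⟩ := hx; omega
  rw [show ofE (2 * m) (fun k => if Even k then (-1) ^ (k / 2) * g (k / 2) else 0) =
      ∑ k ∈ Finset.range (2 * m + 1), Polynomial.C ((-1) ^ k *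
        (if Even k then (-1) ^ (k / 2) * g (k / 2) else 0)) * Polynomial.X ^ (2 * m - k) from rfl]
  rw [← Finset.sum_subset hsub]
  · rw [Finset.sum_image (by intro a _ b _ h; simp only at h; omega)]
    apply Finset.sum_congr rfl
    intro l hl
    simp only [Polynomial.mul_comp, Polynomial.C_comp, Polynomial.pow_comp, Polynomial.X_comp]
    rw [if_pos (even_two_mul l)]
    rw [Nat.mul_div_cancel_left l (by norm_num), pow_mul (-1 : ℂ) 2 l, neg_one_sq, one_pow,
      one_mul, ← pow_mul, show 2*(m-l) = 2*m - 2*l by omega]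
  · intro k hk hknot
    have hodd : ¬ Even k := by
      intro he
      apply hknot
      simp only [Finset.mem_range] at hk
      simp only [Finset.mem_image, Finset.mem_range]
      obtain ⟨r, rfl⟩ := he
      exact ⟨r, by omega, by ring⟩
    rw [if_neg hodd, mul_zero, map_zero, zero_mul]

lemma key_choose (m : ℕ) : ∀ l, l ≤ m →
    (Nat.choose m l : ℂ) * ffa ((m : ℂ) - 1/2) l =
      (-1) ^ l * ffa (-(1/2)) l * (Nat.choose (2 * m) (2 * l) : ℂ) := by
  intro l
  induction l with
  | zero => simp [ffa]
  | succ l ih =>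
    intro hl
    have hl' : l ≤ m := by omega
    have ihh := ih hl'
    have hffs : ∀ x : ℂ, ffa x (l + 1) = ffa x l * (x - l) := fun x => by
      rw [ffa, Finset.prod_range_succ]; rfl
    have h1 : (Nat.choose m (l+1) : ℂ) * (l+1) = (Nat.choose m l : ℂ) * ((m : ℂ) - l) := by
      have := Nat.choose_succ_right_eq m l
      have hc : ((Nat.choose m (l+1) * (l+1) : ℕ) : ℂ) = ((Nat.choose m l * (m - l) : ℕ) : ℂ) := by
        exact_mod_cast congrArg (Nat.cast (R := ℂ)) this
      push_cast [Nat.cast_sub hl'] at hc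
      exact_mod_cast hc
    have h2 : (Nat.choose (2*m) (2*l+1) : ℂ) * (2*l+1) =
        (Nat.choose (2*m) (2*l) : ℂ) * ((2*m : ℂ) - 2*l) := by
      have := Nat.choose_succ_right_eq (2*m) (2*l)
      have hc : ((Nat.choose (2*m) (2*l+1) * (2*l+1) : ℕ) : ℂ) = ((Nat.choose (2*m) (2*l) * (2*m - 2*l) : ℕ) : ℂ) := by
        exact_mod_cast congrArg (Nat.cast (R := ℂ)) this
      push_cast [Nat.cast_sub (by omega : 2*l ≤ 2*m)] at hc
      exact_mod_cast hc
    have h3 : (Nat.choose (2*m) (2*l+2) : ℂ) * (2*l+2) =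
        (Nat.choose (2*m) (2*l+1) : ℂ) * ((2*m : ℂ) - (2*l+1)) := by
      have := Nat.choose_succ_right_eq (2*m) (2*l+1)
      have hc : ((Nat.choose (2*m) (2*l+2) * (2*l+2) : ℕ) : ℂ) = ((Nat.choose (2*m) (2*l+1) * (2*m - (2*l+1)) : ℕ) : ℂ) := by
        exact_mod_cast congrArg (Nat.cast (R := ℂ)) this
      push_cast [Nat.cast_sub (by omega : 2*l+1 ≤ 2*m)] at hc
      exact_mod_cast hc
    rw [hffs, hffs, show 2 * (l+1) = 2*l+2 by ring]
    have hne1 : ((l : ℂ) + 1) ≠ 0 := by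
      exact_mod_cast (Nat.cast_ne_zero (R := ℂ)).2 (Nat.succ_ne_zero l)
    have hne2 : (2 * (l : ℂ) + 1) ≠ 0 := by
      have : ((2 * l + 1 : ℕ) : ℂ) ≠ 0 := (Nat.cast_ne_zero (R := ℂ)).2 (by omega)
      push_cast at this; exact this
    have hne3 : (2 * (l : ℂ) + 2) ≠ 0 := by
      have : ((2 * l + 2 : ℕ) : ℂ) ≠ 0 := (Nat.cast_ne_zero (R := ℂ)).2 (by omega)
      push_cast at this; exact this
    apply mul_right_cancel₀ (mul_ne_zero (mul_ne_zero hne1 hne2) hne3)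
    linear_combination
      (ffa ((m:ℂ) - 1/2) l * ((m:ℂ) - 1/2 - l) * (2*(l:ℂ)+1) * (2*(l:ℂ)+2)) * h1
      + ((-1)^l * ffa (-(1/2)) l * (-(1/2) - (l:ℂ)) * ((l:ℂ)+1) * (2*(l:ℂ)+1)) * h3
      + ((-1)^l * ffa (-(1/2)) l * (-(1/2) - (l:ℂ)) * (2*(m:ℂ) - 2*l - 1) * ((l:ℂ)+1)) * h2
      - (((m:ℂ) - l) * ((m:ℂ) - 1/2 - l) * (2*(l:ℂ)+1) * (2*(l:ℂ)+2)) * ihh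
      + (-14*(m:ℂ)*(l:ℂ) - 28*(m:ℂ)*(l:ℂ)^2 - 16*(m:ℂ)*(l:ℂ)^3 - 2*(m:ℂ) + 12*(m:ℂ)^2*(l:ℂ)
         + 8*(m:ℂ)^2*(l:ℂ)^2 + 4*(m:ℂ)^2 + 2*(l:ℂ) + 10*(l:ℂ)^2 + 16*(l:ℂ)^3 + 8*(l:ℂ)^4) * ihh

/-- multiplicative convolution of even hypergeometric polynomials. -/
theorem stmt11 (m : ℕ) (hm : 1 ≤ m) {i1 j1 i2 j2 : ℕ}
    (a1 : Fin i1 → ℝ) (b1 : Fin j1 → ℝ) (a2 : Fin i2 → ℝ) (b2 : Fin j2 → ℝ)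
    (ha1 : ∀ s, ∀ k < m, (m : ℝ) * a1 s ≠ k)
    (ha2 : ∀ s, ∀ k < m, (m : ℝ) * a2 s ≠ k) :
    boxtimes (2 * m) (hypE m b1 a1) (hypE m b2 a2) =
      hypE m (Fin.append ![-1 / (2 * (m : ℝ))] (Fin.append b1 b2))
        (Fin.append ![1 - 1 / (2 * (m : ℝ))] (Fin.append a1 a2)) := by
  have hm0 : (m : ℂ) ≠ 0 := Nat.cast_ne_zero.2 (by omega)
  rw [hypE, hypE, hypE, hyp, hyp, hyp, ofE_comp_sq, ofE_comp_sq, ofE_comp_sq, boxtimes]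
  apply ofE_congr
  intro k hk
  rw [eC_ofE _ _ hk, eC_ofE _ _ hk]
  by_cases he : Even k
  · obtain ⟨l, rfl⟩ := he
    have hl : l ≤ m := by omega
    have hdiv : (l + l) / 2 = l := by omega
    simp only [if_pos (⟨l, rfl⟩ : Even (l + l)), hdiv]
    -- product splits
    have hx0 : (m : ℂ) * ((-1 / (2 * (m:ℝ)) : ℝ) : ℂ) = -(1/2) := by
      push_cast
      field_simp
    have hy0 : (m : ℂ) * ((1 - 1 / (2 * (m:ℝ)) : ℝ) : ℂ) = (m : ℂ) - 1/2 := by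
      push_cast
      field_simp
    have hB : (∏ t, ffa ((m : ℂ) * ((Fin.append ![-1 / (2 * (m : ℝ))] (Fin.append b1 b2)) t : ℂ)) l)
        = ffa (-(1/2)) l * ((∏ t, ffa ((m:ℂ) * (b1 t : ℂ)) l) * ∏ t, ffa ((m:ℂ) * (b2 t : ℂ)) l) := by
      rw [Fin.prod_univ_add]
      congr 1
      · rw [Fin.prod_univ_one]
        rw [Fin.append_left]
        simp only [Matrix.cons_val_zero]
        rw [hx0]
      · rw [Fin.prod_univ_add]
        congr 1
        · exact Finset.prod_congr rfl fun t _ => by rw [Fin.append_right, Fin.append_left]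
        · exact Finset.prod_congr rfl fun t _ => by rw [Fin.append_right, Fin.append_right]
    have hA : (∏ s, ffa ((m : ℂ) * ((Fin.append ![1 - 1 / (2 * (m : ℝ))] (Fin.append a1 a2)) s : ℂ)) l)
        = ffa ((m:ℂ) - 1/2) l * ((∏ s, ffa ((m:ℂ) * (a1 s : ℂ)) l) * ∏ s, ffa ((m:ℂ) * (a2 s : ℂ)) l) := by
      rw [Fin.prod_univ_add]
      congr 1
      · rw [Fin.prod_univ_one, Fin.append_left]
        simp only [Matrix.cons_val_zero]
        rw [hy0]
      · rw [Fin.prod_univ_add]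
        congr 1
        · exact Finset.prod_congr rfl fun t _ => by rw [Fin.append_right, Fin.append_left]
        · exact Finset.prod_congr rfl fun t _ => by rw [Fin.append_right, Fin.append_right]
    rw [hB, hA]
    have hane : ∀ {i0 : ℕ} (a : Fin i0 → ℝ), (∀ s, ∀ k < m, (m:ℝ) * a s ≠ k) →
        (∏ s, ffa ((m:ℂ) * (a s : ℂ)) l) ≠ 0 := by
      intro i0 a ha
      rw [Finset.prod_ne_zero_iff]
      intro s _
      rw [ffa, Finset.prod_ne_zero_iff]
      intro i hi
      simp only [Finset.mem_range] at hi
      intro h0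
      apply ha s i (by omega)
      have h1 : (m:ℂ) * ((a s : ℝ) : ℂ) = (i : ℕ) := sub_eq_zero.mp h0
      exact_mod_cast h1
    have hA1 := hane a1 ha1
    have hA2 := hane a2 ha2
    have hFne : ffa ((m:ℂ) - 1/2) l ≠ 0 := by
      rw [ffa, Finset.prod_ne_zero_iff]
      intro i _ h0
      have h2 : ((2*m : ℕ) : ℂ) = ((2*i+1 : ℕ) : ℂ) := by push_cast; linear_combination 2*h0
      have h3 : (2*m : ℕ) = 2*i+1 := by exact_mod_cast h2
      omega
    have hDne : (((2*m).choose (l+l) : ℕ) : ℂ) ≠ 0 :=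
      Nat.cast_ne_zero.2 (Nat.choose_pos (by omega)).ne'
    have key := key_choose m l hl
    have h2l : l + l = 2 * l := by omega
    rw [h2l] at hDne ⊢
    have hFne2 : ffa (((m:ℂ) * 2 - 1) / 2) l ≠ 0 := by
      rw [show ((m:ℂ)*2-1)/2 = (m:ℂ)-1/2 by ring]; exact hFne
    simp only [if_pos (even_two_mul l)]
    field_simp
    have hsq : ((-1:ℂ))^l * (-1)^l = 1 := by rw [← mul_pow]; norm_num
    have key2 : ((-1:ℂ))^l * ((m.choose l : ℂ) * ffa ((m:ℂ) - 1/2) l) =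
        ffa (-(1/2)) l * (((2*m).choose (2*l) : ℕ) : ℂ) := by
      linear_combination ((-1:ℂ))^l * key + (ffa (-(1/2)) l * (((2*m).choose (2*l) : ℕ) : ℂ)) * hsq
    rw [show ((m:ℂ)*2-1)/2 = (m:ℂ)-1/2 by ring]
    linear_combination (m.choose l : ℂ) *
      (∏ x : Fin j1, ffa ((m:ℂ) * (b1 x:ℂ)) l) * (∏ x : Fin j2, ffa ((m:ℂ) * (b2 x:ℂ)) l) * key2
  · simp only [if_neg he]
    simp
end FFP
end
end

section
/- Let m ≥ 1 and let B_{2m}(x) = (x² − 1)^m. Then B_{2m} ⊞_{2m} B_{2m} = Dil_2 H^E_m[1; 2], i.e., (x²−1)^m ⊞_{2m} (x²−1)^m = 2^{2m} H_m[1; 2](x²/4), where H_m[1; 2] is the monic degree-m polynomial with e_k = binom(m,k) (m)_k / (2m)_k. -/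
open Polynomial Finset

noncomputable section

namespace FFP

/-! ### Auxiliary lemmas -/

lemma ffa_zero (x : ℂ) : ffa x 0 = 1 := by simp [ffa]
lemma rfa_zero (x : ℂ) : rfa x 0 = 1 := by simp [rfa]
lemma ffa_succ (x : ℂ) (k : ℕ) : ffa x (k+1) = ffa x k * (x - k) := by
  simp [ffa, Finset.prod_range_succ]
lemma rfa_succ (x : ℂ) (k : ℕ) : rfa x (k+1) = rfa x k * (x + k) := by
  simp [rfa, Finset.prod_range_succ]

lemma rfa_succ_left (x : ℂ) (k : ℕ) : rfa x (k+1) = x * rfa (x+1) k := by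
  rw [rfa, Finset.prod_range_succ', rfa]
  push_cast
  rw [add_zero, mul_comm]
  congr 1
  exact Finset.prod_congr rfl (fun i _ => by ring)

lemma ffa_add (x : ℂ) (a b : ℕ) : ffa x (a + b) = ffa x a * ffa (x - a) b := by
  induction b with
  | zero => simp [ffa_zero]
  | succ b ih => rw [← Nat.add_assoc, ffa_succ, ih, ffa_succ]; push_cast; ring

lemma ffa_eq_rfa (x : ℂ) (k : ℕ) : ffa x k = rfa (x - k + 1) k := by
  induction k with
  | zero => simp [ffa_zero, rfa_zero]
  | succ k ih =>
    rw [ffa_succ, ih, rfa_succ_left]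
    have h : x - (k+1:ℕ) + 1 + 1 = x - k + 1 := by push_cast; ring
    rw [h]
    push_cast; ring

lemma ffa_two_mul (y : ℂ) (k : ℕ) :
    ffa (2*y) (2*k) = 4^k * ffa y k * ffa (y - 1/2) k := by
  induction k with
  | zero => simp [ffa_zero]
  | succ k ih =>
    have h2 : 2*(k+1) = 2*k+1+1 := by ring
    rw [h2, ffa_succ, ffa_succ, ih, ffa_succ, ffa_succ]
    push_cast; ring

lemma ffa_natCast (m a : ℕ) : ffa (m:ℂ) a = (m.descFactorial a : ℂ) := by
  induction a with
  | zero => simp [ffa_zero]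
  | succ a ih =>
    rw [ffa_succ, ih, Nat.descFactorial_succ]
    rcases le_or_gt a m with h | h
    · push_cast [h]; ring
    · rw [Nat.descFactorial_of_lt h]
      simp

lemma ffa_nat_ne_zero {m a : ℕ} (h : a ≤ m) : ffa (m:ℂ) a ≠ 0 := by
  rw [ffa_natCast]
  exact_mod_cast Nat.cast_ne_zero.mpr
    (fun h0 => absurd (Nat.descFactorial_eq_zero_iff_lt.mp h0) (not_lt.mpr h))

lemma ffa_half_ne_zero (m k : ℕ) : ffa ((m:ℂ) - 1/2) k ≠ 0 := by
  rw [ffa]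
  apply Finset.prod_ne_zero_iff.mpr
  intro i _ h
  have h2 : ((2*m : ℕ) : ℂ) = ((2*i+1 : ℕ) : ℂ) := by push_cast; linear_combination 2*h
  have := Nat.cast_injective (R := ℂ) h2
  omega

lemma descFactorial_choose (m a : ℕ) :
    (m.descFactorial a : ℂ) = (a.factorial : ℂ) * (m.choose a : ℂ) := by
  exact_mod_cast congrArg (Nat.cast : ℕ → ℂ) (Nat.descFactorial_eq_factorial_mul_choose m a)

lemma ffa_nat_choose (m a : ℕ) : ffa (m:ℂ) a = (a.factorial : ℂ) * (m.choose a : ℂ) := by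
  rw [ffa_natCast, descFactorial_choose]

/-- Chu–Vandermonde for rising factorials. -/
lemma vandermonde (x y : ℂ) (l : ℕ) :
    ∑ a ∈ Finset.range (l+1), (l.choose a : ℂ) * rfa x a * rfa y (l - a)
      = rfa (x + y) l := by
  induction l with
  | zero => simp [rfa]
  | succ l ih =>
    set F : ℕ → ℂ := fun k => (l.choose k : ℂ) * rfa x k * rfa y (l - k) with hF
    set g : ℕ → ℂ := fun k => (l.choose k : ℂ) * rfa x k * rfa y (l + 1 - k) with hg
    rw [Finset.sum_range_succ', rfa_succ, ← ih, Finset.sum_mul]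
    have hsplit : ∀ k ∈ Finset.range (l+1),
        ((l+1).choose (k+1) : ℂ) * rfa x (k+1) * rfa y (l+1-(k+1)) = F k * (x + k) + g (k+1) := by
      intro k hk
      have h1 : l + 1 - (k+1) = l - k := by omega
      have hgk : g (k+1) = (l.choose (k+1) : ℂ) * (rfa x k * (x + k)) * rfa y (l - k) := by
        simp only [hg, h1, rfa_succ]
      rw [h1, Nat.choose_succ_succ, rfa_succ, hgk, hF]
      push_cast
      ring
    rw [Finset.sum_congr rfl hsplit, Finset.sum_add_distrib]
    have e1 := Finset.sum_range_succ' g (l+1)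
    have e2 := Finset.sum_range_succ g (l+1)
    have hgl : g (l+1) = 0 := by
      simp [hg, Nat.choose_eq_zero_of_lt (Nat.lt_succ_self l)]
    have hshift : ∑ k ∈ Finset.range (l+1), g (k+1)
        = ∑ k ∈ Finset.range (l+1), g k - g 0 := by
      rw [e2, hgl, add_zero] at e1
      linear_combination -e1
    have hT0 : ((l+1).choose 0 : ℂ) * rfa x 0 * rfa y (l+1-0) = g 0 := by
      simp [hg]
    rw [hshift, hT0]
    have hgF : ∀ k ∈ Finset.range (l+1), g k = F k * (y + (l - k : ℕ)) := by
      intro k hk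
      have hk' : k ≤ l := by simpa [Nat.lt_succ_iff] using hk
      have h1 : l + 1 - k = (l - k) + 1 := by omega
      simp only [hg, hF, h1, rfa_succ]
      ring
    rw [Finset.sum_congr rfl hgF]
    have hre : (∑ k ∈ Finset.range (l+1), F k * (x + k))
        + ((∑ k ∈ Finset.range (l+1), F k * (y + (l - k : ℕ))) - g 0) + g 0
        = ∑ k ∈ Finset.range (l+1), (F k * (x + k) + F k * (y + (l - k : ℕ))) := by
      rw [Finset.sum_add_distrib]; ring
    rw [hre]
    apply Finset.sum_congr rfl
    intro k hk
    have hk' : k ≤ l := by simpa [Nat.lt_succ_iff] using hk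
    have hc : ((l - k : ℕ) : ℂ) = (l : ℂ) - k := by
      push_cast [hk']; ring
    simp only [hF, hc]
    ring

lemma ofE_coeff (n : ℕ) (f : ℕ → ℂ) (d : ℕ) :
    (ofE n f).coeff d = if d ≤ n then (-1) ^ (n - d) * f (n - d) else 0 := by
  rw [ofE, Polynomial.finset_sum_coeff]
  simp only [Polynomial.coeff_C_mul, Polynomial.coeff_X_pow]
  split_ifs with h
  · rw [Finset.sum_eq_single (n - d)]
    · simp [Nat.sub_sub_self h]
    · intro k hk hne
      have : d ≠ n - k := by
        simp only [Finset.mem_range, Nat.lt_succ_iff] at hk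
        omega
      simp [this]
    · intro h2
      exact absurd (Finset.mem_range.mpr (by omega)) h2
  · apply Finset.sum_eq_zero
    intro k hk
    have : d ≠ n - k := by omega
    simp [this]

lemma dil_coeff (n : ℕ) (α : ℂ) (p : Polynomial ℂ) (d : ℕ) :
    (dil n α p).coeff d = if d ≤ n then α ^ (n - d) * p.coeff d else 0 := by
  rw [dil, Polynomial.finset_sum_coeff]
  simp only [Polynomial.coeff_C_mul, Polynomial.coeff_X_pow]
  split_ifs with h
  · rw [Finset.sum_eq_single d]
    · simp
    · intro k _ hne; simp [Ne.symm hne]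
    · intro h2; exact absurd (Finset.mem_range.mpr (by omega)) h2
  · apply Finset.sum_eq_zero
    intro k hk
    simp only [Finset.mem_range, Nat.lt_succ_iff] at hk
    have : d ≠ k := by omega
    simp [this]

/-- Coefficients of `(X^2 - 1)^m`. -/
lemma B_coeff (m d : ℕ) :
    (((Polynomial.X : Polynomial ℂ) ^ 2 - 1) ^ m).coeff d
      = if d ≤ 2*m ∧ Even d then (-1) ^ (m - d/2) * (m.choose (d/2) : ℂ) else 0 := by
  have hexp : ((Polynomial.X : Polynomial ℂ) ^ 2 - 1) ^ m
      = ∑ j ∈ Finset.range (m+1),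
          Polynomial.C ((-1:ℂ) ^ (m - j) * (m.choose j : ℂ)) * Polynomial.X ^ (2*j) := by
    rw [sub_eq_add_neg, add_pow]
    apply Finset.sum_congr rfl
    intro j hj
    rw [← pow_mul]
    rw [show (-1 : Polynomial ℂ) ^ (m - j) = Polynomial.C ((-1:ℂ)^(m-j)) by simp]
    rw [show ((m.choose j : ℕ) : Polynomial ℂ) = Polynomial.C ((m.choose j : ℂ)) by simp]
    rw [map_mul]
    ring
  rw [hexp, Polynomial.finset_sum_coeff]
  simp only [Polynomial.coeff_C_mul, Polynomial.coeff_X_pow]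
  split_ifs with h
  · obtain ⟨hd, he⟩ := h
    obtain ⟨t, ht⟩ := he
    rw [Finset.sum_eq_single (d/2)]
    · have : 2 * (d/2) = d := by omega
      simp [this]
    · intro k hk hne
      have : d ≠ 2*k := by omega
      simp [this]
    · intro h2; exact absurd (Finset.mem_range.mpr (by omega)) h2
  · apply Finset.sum_eq_zero
    intro k hk
    simp only [Finset.mem_range, Nat.lt_succ_iff] at hk
    have : d ≠ 2*k := by
      intro hc
      exact h ⟨by omega, ⟨k, by omega⟩⟩
    simp [this]

/-- Sum over `range (2l+1)` of a function vanishing at odd arguments. -/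
lemma sum_even_vanish (l : ℕ) (g : ℕ → ℂ) (h : ∀ i < 2*l+1, Odd i → g i = 0) :
    ∑ i ∈ Finset.range (2*l+1), g i = ∑ a ∈ Finset.range (l+1), g (2*a) := by
  induction l with
  | zero => simp
  | succ l ih =>
    have h2 : 2*(l+1)+1 = (2*l+1) + 1 + 1 := by ring
    rw [h2, Finset.sum_range_succ, Finset.sum_range_succ,
        ih (fun i hi ho => h i (by omega) ho),
        Finset.sum_range_succ (fun a => g (2*a)) (l+1),
        h (2*l+1) (by omega) ⟨l, by ring⟩, show 2*l+1+1 = 2*(l+1) by ring]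
    ring

lemma eC_B_odd {m k : ℕ} (hk : k ≤ 2*m) (ho : Odd k) :
    eC (2*m) k (((Polynomial.X : Polynomial ℂ) ^ 2 - 1) ^ m) = 0 := by
  rw [eC, B_coeff]
  have : ¬ (2*m - k ≤ 2*m ∧ Even (2*m - k)) := by
    rintro ⟨-, t, ht⟩
    obtain ⟨s, hs⟩ := ho
    omega
  rw [if_neg this, mul_zero]

lemma eC_B_even {m a : ℕ} (ha : a ≤ m) :
    eC (2*m) (2*a) (((Polynomial.X : Polynomial ℂ) ^ 2 - 1) ^ m)
      = (-1)^a * (m.choose a : ℂ) := by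
  rw [eC, B_coeff]
  have h1 : 2*m - 2*a ≤ 2*m ∧ Even (2*m - 2*a) := ⟨by omega, ⟨m - a, by omega⟩⟩
  rw [if_pos h1]
  have h2 : (2*m - 2*a)/2 = m - a := by omega
  have h3 : m - (m - a) = a := by omega
  rw [h2, h3, Nat.choose_symm ha]
  have h4 : ((-1 : ℂ))^(2*a) = 1 := by
    rw [pow_mul]; norm_num
  rw [h4, one_mul]

/-- Coefficients of `(ofE n f).comp (X^2)`. -/
lemma ofE_comp_sq_coeff (n : ℕ) (f : ℕ → ℂ) (d : ℕ) :
    ((ofE n f).comp (Polynomial.X ^ 2)).coeff d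
      = if d ≤ 2*n ∧ Even d then (-1) ^ (n - d/2) * f (n - d/2) else 0 := by
  have hcomp : (ofE n f).comp (Polynomial.X ^ 2)
      = ∑ k ∈ Finset.range (n+1),
          Polynomial.C ((-1)^k * f k) * Polynomial.X ^ (2*(n-k)) := by
    rw [ofE, Polynomial.sum_comp]
    apply Finset.sum_congr rfl
    intro k hk
    rw [Polynomial.mul_comp, Polynomial.C_comp, Polynomial.X_pow_comp, ← pow_mul]
  rw [hcomp, Polynomial.finset_sum_coeff]
  simp only [Polynomial.coeff_C_mul, Polynomial.coeff_X_pow]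
  split_ifs with h
  · obtain ⟨hd, t, ht⟩ := h
    rw [Finset.sum_eq_single (n - d/2)]
    · have : 2 * (n - (n - d/2)) = d := by omega
      simp [this]
    · intro k hk hne
      simp only [Finset.mem_range, Nat.lt_succ_iff] at hk
      have : d ≠ 2*(n-k) := by omega
      simp [this]
    · intro h2; exact absurd (Finset.mem_range.mpr (by omega)) h2
  · apply Finset.sum_eq_zero
    intro k hk
    simp only [Finset.mem_range, Nat.lt_succ_iff] at hk
    have : d ≠ 2*(n-k) := by
      intro hc
      exact h ⟨by omega, ⟨n-k, by omega⟩⟩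
    simp [this]

/-- The hypergeometric polynomial `H_m[1;2]` in explicit form. -/
lemma hyp12_eq (m : ℕ) :
    hyp m ![(1:ℝ)] ![(2:ℝ)]
      = ofE m fun k => (m.choose k : ℂ) * ffa (m:ℂ) k / ffa ((2*m : ℕ):ℂ) k := by
  unfold hyp
  congr 1
  funext k
  have e1 : (m:ℂ) * ((1:ℝ):ℂ) = (m:ℂ) := by norm_num
  have e2 : (m:ℂ) * ((2:ℝ):ℂ) = ((2*m:ℕ):ℂ) := by push_cast; ring
  simp [Fin.prod_univ_one, e1, e2]
  rw [mul_comm (m:ℂ) 2]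

/-- Per-term identity inside the key sum. -/
lemma perterm (m l a : ℕ) (hl : l ≤ m) (ha : a ≤ l) :
    ffa ((2*m:ℕ):ℂ) (2*l) *
      (((-1)^a * (m.choose a : ℂ)) * ((-1)^(l-a) * (m.choose (l-a) : ℂ)) /
        (ffa ((2*m:ℕ):ℂ) (2*a) * ffa ((2*m:ℕ):ℂ) (2*(l-a))))
    = (-1)^l * (ffa ((m:ℕ):ℂ) l / ((l.factorial : ℂ) * ffa ((m:ℂ) - 1/2) l)) *
        ((l.choose a : ℂ) * rfa ((m:ℂ) - 1/2 - l + 1) a * rfa ((m:ℂ) - 1/2 - l + 1) (l-a)) := by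
  set c : ℂ := (m:ℂ) - 1/2 with hc
  set x : ℂ := c - l + 1 with hx
  set b : ℕ := l - a with hb
  have hab : a + b = l := by omega
  have hbl : b ≤ l := by omega
  have ham : a ≤ m := le_trans ha hl
  have hbm : b ≤ m := le_trans hbl hl
  -- basic product splittings
  have f1 : ffa ((2*m:ℕ):ℂ) (2*l) = 4^l * ffa (m:ℂ) l * ffa c l := by
    rw [show ((2*m:ℕ):ℂ) = 2*(m:ℂ) by push_cast; ring, ffa_two_mul, hc]
  have f2 : ffa ((2*m:ℕ):ℂ) (2*a) = 4^a * ffa (m:ℂ) a * ffa c a := by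
    rw [show ((2*m:ℕ):ℂ) = 2*(m:ℂ) by push_cast; ring, ffa_two_mul, hc]
  have f3 : ffa ((2*m:ℕ):ℂ) (2*b) = 4^b * ffa (m:ℂ) b * ffa c b := by
    rw [show ((2*m:ℕ):ℂ) = 2*(m:ℂ) by push_cast; ring, ffa_two_mul, hc]
  have f4 : ffa (m:ℂ) a = (a.factorial : ℂ) * (m.choose a : ℂ) := ffa_nat_choose m a
  have f5 : ffa (m:ℂ) b = (b.factorial : ℂ) * (m.choose b : ℂ) := ffa_nat_choose m b
  have f7 : ((l.choose a : ℂ)) * (a.factorial : ℂ) * (b.factorial : ℂ) = (l.factorial : ℂ) := by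
    exact_mod_cast congrArg (Nat.cast : ℕ → ℂ)
      (Nat.choose_mul_factorial_mul_factorial ha ▸ (by rw [hb]) : l.choose a * a.factorial * b.factorial = l.factorial)
  have f8 : ffa c l = ffa c b * rfa x a := by
    have h1 : ffa c (b + a) = ffa c b * ffa (c - b) a := ffa_add c b a
    have h2 : ffa (c - b) a = rfa (c - b - a + 1) a := ffa_eq_rfa (c - b) a
    have h3 : c - (b:ℕ) - (a:ℕ) + 1 = x := by
      rw [hx]
      have : ((a:ℂ) + (b:ℂ)) = (l:ℂ) := by exact_mod_cast congrArg (Nat.cast : ℕ → ℂ) hab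
      linear_combination -this
    rw [show b + a = l from by omega] at h1
    rw [h1, h2, h3]
  have f9 : ffa c l = ffa c a * rfa x b := by
    have h1 : ffa c (a + b) = ffa c a * ffa (c - a) b := ffa_add c a b
    have h2 : ffa (c - a) b = rfa (c - a - b + 1) b := ffa_eq_rfa (c - a) b
    have h3 : c - (a:ℕ) - (b:ℕ) + 1 = x := by
      rw [hx]
      have : ((a:ℂ) + (b:ℂ)) = (l:ℂ) := by exact_mod_cast congrArg (Nat.cast : ℕ → ℂ) hab
      linear_combination -this
    rw [hab] at h1
    rw [h1, h2, h3]
  have f10 : (4:ℂ)^a * 4^b = 4^l := by rw [← pow_add, hab]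
  -- nonvanishing
  have n2 : ffa ((2*m:ℕ):ℂ) (2*a) ≠ 0 := ffa_nat_ne_zero (by omega)
  have n3 : ffa ((2*m:ℕ):ℂ) (2*b) ≠ 0 := ffa_nat_ne_zero (by omega)
  have n4 : (l.factorial : ℂ) ≠ 0 := by exact_mod_cast Nat.factorial_ne_zero l
  have n5 : ffa c l ≠ 0 := by rw [hc]; exact ffa_half_ne_zero m l
  have f11 : ((-1:ℂ))^a * (-1)^b = (-1)^l := by rw [← pow_add, hab]
  have f89 : ffa c l * ffa c l = (ffa c b * rfa x a) * (ffa c a * rfa x b) := by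
    rw [← f8, ← f9]
  have main :
      (4^l * ffa (m:ℂ) l * ffa c l) * (((-1:ℂ))^a * (m.choose a:ℂ) * ((-1:ℂ)^b * (m.choose b:ℂ)))
          * ((l.factorial:ℂ) * ffa c l)
        = ((-1:ℂ))^l * ffa (m:ℂ) l * ((l.choose a:ℂ) * rfa x a * rfa x b)
          * ((4^a * ((a.factorial:ℂ) * (m.choose a:ℂ)) * ffa c a)
             * (4^b * ((b.factorial:ℂ) * (m.choose b:ℂ)) * ffa c b)) := by
    calc (4^l * ffa (m:ℂ) l * ffa c l) * (((-1:ℂ))^a * (m.choose a:ℂ) * ((-1:ℂ)^b * (m.choose b:ℂ)))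
          * ((l.factorial:ℂ) * ffa c l)
        = ((4:ℂ)^l * ffa (m:ℂ) l * (m.choose a:ℂ) * (m.choose b:ℂ) * (l.factorial:ℂ))
            * ((-1:ℂ)^a * (-1:ℂ)^b) * (ffa c l * ffa c l) := by ring
      _ = ((4:ℂ)^l * ffa (m:ℂ) l * (m.choose a:ℂ) * (m.choose b:ℂ) * (l.factorial:ℂ))
            * ((-1:ℂ)^l) * ((ffa c b * rfa x a) * (ffa c a * rfa x b)) := by rw [f11, f89]
      _ = _ := by rw [← f7, ← f10]; ring
  rw [mul_div_assoc', mul_div_assoc', div_mul_eq_mul_div,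
      div_eq_div_iff (mul_ne_zero n2 n3) (mul_ne_zero n4 n5), f1, f2, f3, f4, f5]
  linear_combination main

/-- The key coefficient identity. -/
lemma core (m l : ℕ) (hl : l ≤ m) :
    ffa ((2*m:ℕ):ℂ) (2*l) * ∑ a ∈ Finset.range (l+1),
      ((-1)^a * (m.choose a : ℂ)) * ((-1)^(l-a) * (m.choose (l-a) : ℂ)) /
        (ffa ((2*m:ℕ):ℂ) (2*a) * ffa ((2*m:ℕ):ℂ) (2*(l-a)))
    = 2^(2*l) * ((-1)^l * ((m.choose l : ℂ) * ffa (m:ℂ) l / ffa ((2*m:ℕ):ℂ) l)) := by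
  set c : ℂ := (m:ℂ) - 1/2 with hc
  set x : ℂ := c - l + 1 with hx
  rw [Finset.mul_sum]
  rw [Finset.sum_congr rfl (fun a ha =>
    perterm m l a hl (Nat.lt_succ_iff.mp (Finset.mem_range.mp ha)))]
  rw [← Finset.mul_sum, vandermonde x x l]
  have hl2 : l ≤ 2*m := by omega
  have hxx : rfa (x + x) l = ffa ((2*m - l:ℕ):ℂ) l := by
    rw [ffa_eq_rfa]
    congr 1
    rw [hx, hc]
    push_cast [hl2]
    ring
  rw [hxx]
  have key : ffa ((2*m:ℕ):ℂ) l * ffa ((2*m - l:ℕ):ℂ) l = 4^l * ffa (m:ℂ) l * ffa c l := by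
    have h1 := ffa_add ((2*m:ℕ):ℂ) l l
    rw [show l + l = 2*l from by ring] at h1
    rw [show ((2*m:ℕ):ℂ) - (l:ℕ) = ((2*m - l:ℕ):ℂ) from by push_cast [hl2]; ring] at h1
    rw [← h1, show ((2*m:ℕ):ℂ) = 2*(m:ℂ) from by push_cast; ring, ffa_two_mul, hc]
  have f6 : ffa (m:ℂ) l = (l.factorial:ℂ) * (m.choose l:ℂ) := ffa_nat_choose m l
  have h4 : (2:ℂ)^(2*l) = 4^l := by rw [pow_mul]; norm_num
  have n4 : (l.factorial : ℂ) ≠ 0 := by exact_mod_cast Nat.factorial_ne_zero l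
  have n5 : ffa c l ≠ 0 := by rw [hc]; exact ffa_half_ne_zero m l
  have nE : ffa ((2*m:ℕ):ℂ) l ≠ 0 := ffa_nat_ne_zero hl2
  rw [mul_div_assoc', div_mul_eq_mul_div, mul_div_assoc', mul_div_assoc',
      div_eq_div_iff (mul_ne_zero n4 n5) nE]
  linear_combination ((-1:ℂ))^l * ffa (m:ℂ) l * key
    - ((-1:ℂ))^l * (m.choose l:ℂ) * (l.factorial:ℂ) * ffa c l * ffa (m:ℂ) l * h4
    + ((-1:ℂ))^l * 4^l * ffa c l * ffa (m:ℂ) l * f6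

/-- `B_{2m} ⊞_{2m} B_{2m} = Dil_2 H^E_m[1; 2]`. -/
theorem stmt14 (m : ℕ) (hm : 1 ≤ m) :
    boxplus (2 * m) (((Polynomial.X : Polynomial ℂ) ^ 2 - 1) ^ m)
        (((Polynomial.X : Polynomial ℂ) ^ 2 - 1) ^ m) =
      dil (2 * m) 2 (hypE m ![(1 : ℝ)] ![(2 : ℝ)]) := by
  set B : Polynomial ℂ := ((Polynomial.X : Polynomial ℂ) ^ 2 - 1) ^ m with hB
  apply Polynomial.ext
  intro d
  rw [boxplus, ofE_coeff, dil_coeff, hypE, hyp12_eq, ofE_comp_sq_coeff]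
  by_cases hd : d ≤ 2*m
  · rw [if_pos hd, if_pos hd]
    by_cases hev : Even d
    · -- even case
      obtain ⟨t, ht⟩ := hev
      set l : ℕ := m - d/2 with hldef
      have hld : 2*m - d = 2*l := by omega
      have hdl : m - d/2 = l := rfl
      have hlm : l ≤ m := by omega
      rw [if_pos ⟨hd, ⟨t, ht⟩⟩, hld]
      have hsgn : ((-1:ℂ))^(2*l) = 1 := by rw [pow_mul]; norm_num
      rw [hsgn, one_mul]
      -- antidiagonal to range
      rw [Finset.Nat.sum_antidiagonal_eq_sum_range_succ_mk]
      have hvanish : ∀ i < 2*l+1, Odd i →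
          eC (2*m) i B * eC (2*m) (2*l - i) B
            / (ffa ((2*m:ℕ):ℂ) i * ffa ((2*m:ℕ):ℂ) (2*l - i)) = 0 := by
        intro i hi ho
        rw [eC_B_odd (by omega) ho, zero_mul, zero_div]
      rw [sum_even_vanish l _ hvanish]
      have hterm : ∀ a ∈ Finset.range (l+1),
          eC (2*m) (2*a) B * eC (2*m) (2*l - 2*a) B
            / (ffa ((2*m:ℕ):ℂ) (2*a) * ffa ((2*m:ℕ):ℂ) (2*l - 2*a))
          = ((-1)^a * (m.choose a : ℂ)) * ((-1)^(l-a) * (m.choose (l-a) : ℂ)) /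
              (ffa ((2*m:ℕ):ℂ) (2*a) * ffa ((2*m:ℕ):ℂ) (2*(l-a))) := by
        intro a ha
        have ha' : a ≤ l := Nat.lt_succ_iff.mp (Finset.mem_range.mp ha)
        have h2 : 2*l - 2*a = 2*(l-a) := by omega
        rw [h2, eC_B_even (le_trans ha' hlm), eC_B_even (le_trans (Nat.sub_le l a) hlm)]
      rw [Finset.sum_congr rfl hterm]
      exact core m l hlm
    · -- odd case
      rw [if_neg (fun h => hev h.2), mul_zero]
      have : ∀ ij ∈ Finset.HasAntidiagonal.antidiagonal (2*m - d),
          eC (2*m) ij.1 B * eC (2*m) ij.2 B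
            / (ffa ((2*m:ℕ):ℂ) ij.1 * ffa ((2*m:ℕ):ℂ) ij.2) = 0 := by
        rintro ⟨i, j⟩ hij
        rw [Finset.HasAntidiagonal.mem_antidiagonal] at hij
        have hodd : Odd (2*m - d) := by
          rcases Nat.even_or_odd d with h | h
          · exact absurd h hev
          · obtain ⟨s, hs⟩ := h; exact ⟨m - s - 1, by omega⟩
        rcases Nat.even_or_odd i with hi | hi
        · have hj : Odd j := by
            obtain ⟨u, hu⟩ := hi; obtain ⟨v, hv⟩ := hodd
            exact ⟨v - u, by omega⟩
          rw [eC_B_odd (by omega) hj, mul_zero, zero_div]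
        · rw [eC_B_odd (by omega) hi, zero_mul, zero_div]
      rw [Finset.sum_eq_zero this, mul_zero, mul_zero]
  · rw [if_neg hd, if_neg hd]

end FFP
end
end
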